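/- arXiv:math/0310383 — 3 statements merged into one kernel-verified Lean document; each statement's English description precedes it below -/
import Mathlib

section
/- Shifting lemma, case (ii) average bound: Let (a_1,...,a_t) be positive integers bounded in average by B with a_t = B+1, a_k = B for s ≤ k ≤ t-1 (where 2 ≤ s ≤ t-1), and a_{s-1} < B. Then for every r with s-1 ≤ r ≤ t-1, one has a_1 + ... + a_r ≤ B*r - 1; consequently the sequence b with b_{s-1} = a_{s-1} + 1, b_t = a_t - 1, and b_j = a_j otherwise, is bounded in average by B. -/
/-! Since `a t = B + 1` and `a k = B` for `r < k < t`, the bound on the full sum `a 1 + ... + a t`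
leaves each prefix ending at `r ∈ [s - 1, t - 1]` at least one unit below `B * r`. Moving one unit
from position `t` to position `s - 1` adds exactly one to those prefixes, which the deficit absorbs;
shorter prefixes are unchanged and the full sum does not grow. -/

open Finset

section

variable {a b : ℕ → ℕ} {B r s t : ℕ}

theorem sum_Icc_add_one_le_mul_of_tail (havg : ∑ j ∈ Icc 1 t, a j ≤ B * t)
    (hat : a t = B + 1) (hrt : r < t) (hmid : ∀ k, r < k → k < t → a k = B) :
    ∑ j ∈ Icc 1 r, a j + 1 ≤ B * r := by
  obtain ⟨n, rfl⟩ := Nat.exists_eq_add_of_lt hrt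
  have hsplit :
      ∑ j ∈ Icc 1 (r + n + 1), a j = ∑ j ∈ Icc 1 r, a j + ∑ j ∈ Ioc r (r + n + 1), a j := by
    simpa only [← Icc_add_one_left_eq_Ioc 0, zero_add] using
      (sum_Ioc_consecutive a (Nat.zero_le r) hrt.le).symm
  have hmidsum : ∑ j ∈ Ioc r (r + n), a j = n * B := by
    rw [sum_congr rfl fun k hk => hmid k (mem_Ioc.1 hk).1 (by grind), sum_const,
      Nat.card_Ioc, smul_eq_mul, Nat.add_sub_cancel_left]
  rw [hsplit, sum_Ioc_succ_top (by omega), hmidsum, hat] at havg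
  linarith

theorem sum_Icc_shift_eq
    (hb : ∀ j, b j = if j = s - 1 then a j + 1 else if j = t then a j - 1 else a j) (hrt : r < t) :
    ∑ j ∈ Icc 1 r, b j = ∑ j ∈ Icc 1 r, a j + if s - 1 ∈ Icc 1 r then 1 else 0 := by
  have hpoint : ∀ j ∈ Icc 1 r, b j = a j + if j = s - 1 then 1 else 0 := by
    intro j hj
    have hjt : j ≠ t := by grind
    by_cases hjs : j = s - 1 <;> simp [hb, hjs, hjt]
  rw [sum_congr rfl hpoint, sum_add_distrib, sum_ite_eq']

end

theorem shifting_case_ii_avg_general (B t s : ℕ) (a : ℕ → ℕ)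
    (havg : ∀ r, 1 ≤ r → r ≤ t → ∑ j ∈ Finset.Icc 1 r, a j ≤ B * r)
    (hat : a t = B + 1) (hs2 : 2 ≤ s) (hst : s ≤ t - 1)
    (hmid : ∀ k, s ≤ k → k ≤ t - 1 → a k = B)
    (b : ℕ → ℕ)
    (hb : ∀ j, b j = if j = s - 1 then a j + 1 else if j = t then a j - 1 else a j) :
    (∀ r, s - 1 ≤ r → r ≤ t - 1 → ∑ j ∈ Finset.Icc 1 r, a j ≤ B * r - 1) ∧
      ∀ r, 1 ≤ r → r ≤ t → ∑ j ∈ Finset.Icc 1 r, b j ≤ B * r := by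
  obtain ⟨n, rfl⟩ : ∃ n, t = n + 1 := ⟨t - 1, by omega⟩
  have hdeficit : ∀ r, s - 1 ≤ r → r ≤ n → ∑ j ∈ Icc 1 r, a j + 1 ≤ B * r := fun r hsr hrn =>
    sum_Icc_add_one_le_mul_of_tail (havg _ (by omega) le_rfl) hat (by omega)
      fun k hrk hkt => hmid k (by omega) (by omega)
  refine ⟨fun r hsr hrn => Nat.le_sub_one_of_lt (hdeficit r hsr hrn), fun r hr hrt => ?_⟩
  obtain hrt | rfl := Nat.lt_or_eq_of_le hrt
  · rw [sum_Icc_shift_eq hb hrt]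
    split_ifs with hmem
    · exact hdeficit r (by grind) (by omega)
    · simpa using havg r hr hrt.le
  · have hbt : b (n + 1) = B := by rw [hb, if_neg (by omega), if_pos rfl, hat, Nat.add_sub_cancel]
    have hshift : ∑ j ∈ Icc 1 n, b j ≤ ∑ j ∈ Icc 1 n, a j + 1 := by
      rw [sum_Icc_shift_eq hb n.lt_add_one]
      split_ifs <;> omega
    rw [sum_Icc_succ_top (by omega), hbt, mul_add_one]
    linarith [hdeficit n (by omega) le_rfl]

theorem shifting_case_ii_avg (B t s : ℕ) (hB : 1 < B) (a : ℕ → ℕ)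
    (hpos : ∀ j, 1 ≤ j → j ≤ t → 0 < a j)
    (havg : ∀ r, 1 ≤ r → r ≤ t → ∑ j ∈ Finset.Icc 1 r, a j ≤ B * r)
    (hat : a t = B + 1) (hs2 : 2 ≤ s) (hst : s ≤ t - 1)
    (hmid : ∀ k, s ≤ k → k ≤ t - 1 → a k = B) (hsa : a (s - 1) < B)
    (b : ℕ → ℕ)
    (hb : ∀ j, b j = if j = s - 1 then a j + 1 else if j = t then a j - 1 else a j) :
    (∀ r, s - 1 ≤ r → r ≤ t - 1 → ∑ j ∈ Finset.Icc 1 r, a j ≤ B * r - 1) ∧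
      ∀ r, 1 ≤ r → r ≤ t → ∑ j ∈ Finset.Icc 1 r, b j ≤ B * r :=
  shifting_case_ii_avg_general B t s a havg hat hs2 hst hmid b hb
end

section
/- For any sequence (a_1,...,a_m) of positive integers bounded in average by 2, the continuant satisfies K(a_1,...,a_m) ≤ (1 + sqrt(2))^{m+1}. -/
/-- Auxiliary continuant, recursing on the first entry. -/
def contAux : List ℕ → ℕ
  | [] => 1
  | [a] => a
  | a :: b :: t => a * contAux (b :: t) + contAux t

/-- The continuant `K(a₁,…,aₘ)`: `K() = 1`, `K(a₁) = a₁`,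
`K(a₁,…,aₘ) = aₘ·K(a₁,…,a_{m-1}) + K(a₁,…,a_{m-2})`. -/
def continuant (l : List ℕ) : ℕ := contAux l.reverse

/-- A list of positive integers is bounded in average by `B` if every
prefix sum `a₁ + ⋯ + a_r` is at most `B·r`. -/
def BddAvg (B : ℕ) (l : List ℕ) : Prop :=
  ∀ r, 1 ≤ r → r ≤ l.length → (l.take r).sum ≤ B * r

/-!
Let `λ = 1 + √2`, so that `λ(√2 - 1) = 1`. For every sequence of positive integers the
potential `Φ = K(a₁,…,aₘ) + (√2 - 1)·K(a₂,…,aₘ)` satisfies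
`Φ ≤ λ^(m+1) · √2^(a₁ + ⋯ + aₘ) / 2^m`: prepending an entry `x` multiplies the bound by
`λ √2^x / 2`, and since `K(a₂,…,aₘ) ≤ K(a₁,…,aₘ)` this factor dominates the growth of `Φ`
(with equality for `x = 2`). Hence `K ≤ λ^(m+1)` as soon as `a₁ + ⋯ + aₘ ≤ 2m`.
-/

theorem BddAvg.sum_le {B : ℕ} {l : List ℕ} (h : BddAvg B l) : l.sum ≤ B * l.length := by
  rcases Nat.eq_zero_or_pos l.length with hl | hl
  · simp [List.length_eq_zero_iff.mp hl]
  · simpa using h l.length hl le_rfl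

theorem contAux_le_contAux_cons {y : ℕ} (hy : 0 < y) (t : List ℕ) :
    contAux t ≤ contAux (y :: t) := by
  match t with
  | [] => exact hy
  | z :: t => exact (Nat.le_mul_of_pos_left _ hy).trans (Nat.le_add_right _ _)

theorem natCast_add_two_add_sqrt_two_le (k : ℕ) :
    (k : ℝ) + 2 + √2 ≤ (1 + √2) * √2 ^ (k + 1) := by
  have hs : √2 * √2 = 2 := Real.mul_self_sqrt zero_le_two
  have bernoulli : 1 + ((k + 1 : ℕ) : ℝ) * (√2 - 1) ≤ √2 ^ (k + 1) := by
    simpa using one_add_mul_le_pow (a := √2 - 1) (by linarith [Real.sqrt_nonneg 2]) (k + 1)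
  calc (k : ℝ) + 2 + √2 = (1 + √2) * (1 + ((k + 1 : ℕ) : ℝ) * (√2 - 1)) := by
        push_cast; linear_combination (-(k : ℝ) - 1) * hs
    _ ≤ (1 + √2) * √2 ^ (k + 1) := by gcongr

theorem two_mul_potential_step_le {x : ℕ} (hx : 0 < x) {u v : ℝ} (hv : 0 ≤ v) (hvu : v ≤ u) :
    2 * ((x + √2 - 1) * u + v) ≤ √2 ^ x * ((1 + √2) * u + v) := by
  have hs : √2 * √2 = 2 := Real.mul_self_sqrt zero_le_two
  have hs1 : 1 ≤ √2 := Real.one_le_sqrt.mpr one_le_two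
  have hs2 : √2 ≤ 2 := by nlinarith
  match x, hx with
  | 1, _ =>
    rw [pow_one, Nat.cast_one]
    nlinarith [mul_nonneg (sub_nonneg.mpr hs2) (sub_nonneg.mpr hvu)]
  | 2, _ => apply le_of_eq; rw [Real.sq_sqrt zero_le_two]; push_cast; ring
  | k + 3, _ =>
    have hpow : √2 ^ (k + 3) = 2 * √2 ^ (k + 1) := by
      rw [show k + 3 = 2 + (k + 1) by ring, pow_add, Real.sq_sqrt zero_le_two]
    have hu := mul_le_mul_of_nonneg_right (natCast_add_two_add_sqrt_two_le k) (hv.trans hvu)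
    have hv' := mul_le_mul_of_nonneg_right (one_le_pow₀ hs1 : 1 ≤ √2 ^ (k + 1)) hv
    rw [hpow]
    push_cast
    linarith

theorem two_pow_mul_potential_le (b : List ℕ) (hb : ∀ x ∈ b, 0 < x) :
    2 ^ b.length * ((contAux b : ℝ) + (√2 - 1) * contAux b.tail) ≤
      (1 + √2) ^ (b.length + 1) * √2 ^ b.sum := by
  have hs : √2 * √2 = 2 := Real.mul_self_sqrt zero_le_two
  have hs1 : 1 ≤ √2 := Real.one_le_sqrt.mpr one_le_two
  induction b using contAux.induct with
  | case1 => simp [contAux]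
  | case2 a =>
    have hstep := two_mul_potential_step_le (hb a (by simp)) le_rfl zero_le_one
    simp only [contAux, List.length_singleton, List.tail_cons, List.sum_singleton,
      Nat.cast_one, mul_one, add_zero] at hstep ⊢
    calc 2 ^ 1 * (a + (√2 - 1)) = 2 * (a + √2 - 1) := by ring
      _ ≤ √2 ^ a * (1 + √2) := hstep
      _ ≤ √2 ^ a * (1 + √2) * (1 + √2) := le_mul_of_one_le_right (by positivity) (by linarith)
      _ = (1 + √2) ^ (1 + 1) * √2 ^ a := by ring
  | case3 a b t ih _ =>
    set u : ℝ := (contAux (b :: t) : ℝ)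
    set v : ℝ := (contAux t : ℝ)
    have hv : v ≤ u := Nat.cast_le.mpr (contAux_le_contAux_cons (hb b (by simp)) t)
    have hstep := two_mul_potential_step_le (hb a (by simp)) (Nat.cast_nonneg _) hv
    have ih := ih fun x hx => hb x (List.mem_cons_of_mem a hx)
    simp only [List.length_cons, List.tail_cons, List.sum_cons] at ih ⊢
    calc 2 ^ (t.length + 1 + 1) * ((contAux (a :: b :: t) : ℝ) + (√2 - 1) * u)
        = 2 ^ (t.length + 1) * (2 * ((a + √2 - 1) * u + v)) := by
          simp only [contAux, u, v]; push_cast; ring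
      _ ≤ 2 ^ (t.length + 1) * (√2 ^ a * ((1 + √2) * u + v)) := by gcongr
      _ = √2 ^ a * (1 + √2) * (2 ^ (t.length + 1) * (u + (√2 - 1) * v)) := by
          linear_combination (-(2 : ℝ) ^ (t.length + 1) * √2 ^ a * v) * hs
      _ ≤ √2 ^ a * (1 + √2) * ((1 + √2) ^ (t.length + 1 + 1) * √2 ^ (b + t.sum)) := by
          gcongr
      _ = (1 + √2) ^ (t.length + 1 + 1 + 1) * √2 ^ (a + (b + t.sum)) := by ring

theorem contAux_le_of_sum_le (b : List ℕ) (hb : ∀ x ∈ b, 0 < x) (hsum : b.sum ≤ 2 * b.length) :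
    (contAux b : ℝ) ≤ (1 + √2) ^ (b.length + 1) := by
  have hs1 : 1 ≤ √2 := Real.one_le_sqrt.mpr one_le_two
  refine le_of_mul_le_mul_left ?_ (pow_pos two_pos b.length)
  calc 2 ^ b.length * (contAux b : ℝ)
      ≤ 2 ^ b.length * ((contAux b : ℝ) + (√2 - 1) * contAux b.tail) := by
        gcongr; exact le_add_of_nonneg_right (by positivity)
    _ ≤ (1 + √2) ^ (b.length + 1) * √2 ^ b.sum := two_pow_mul_potential_le b hb
    _ ≤ (1 + √2) ^ (b.length + 1) * √2 ^ (2 * b.length) := by gcongr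
    _ = 2 ^ b.length * (1 + √2) ^ (b.length + 1) := by
        rw [pow_mul, Real.sq_sqrt zero_le_two, mul_comm]

theorem continuant_le_of_sum_le (a : List ℕ) (ha : ∀ x ∈ a, 0 < x) (hsum : a.sum ≤ 2 * a.length) :
    (continuant a : ℝ) ≤ (1 + √2) ^ (a.length + 1) := by
  simpa [continuant] using contAux_le_of_sum_le a.reverse (by simpa using ha) (by simpa using hsum)

theorem continuant_le_of_bddAvg_two (a : List ℕ)
    (ha : ∀ x ∈ a, 0 < x) (havg : BddAvg 2 a) :
    (continuant a : ℝ) ≤ (1 + Real.sqrt 2) ^ (a.length + 1) :=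
  continuant_le_of_sum_le a ha havg.sum_le
end

section
/- Let S̄_n(2) denote the number of finite sequences of positive integers bounded in average by 2 whose continuant is at most n. Then for every ε > 0, S̄_n(2) ≫ n^{2 log 2 / log(1+√2) − ε}; i.e., liminf_{n→∞} log(S̄_n(2))/log n ≥ 2 log 2 / log(1+√2) ≈ 1.5728394. -/
/-!
Reading `aᵢ - 1` as the number of down-steps after the `i`-th up-step turns every Dyck word of
semilength `k` into a sequence of length `k` bounded in average by 2, so there are at least
`catalan k`, i.e. about `4 ^ k`, such sequences.

Every positive sequence with `a₁ + ⋯ + a_m ≤ 2m` has continuant at most `(1 + √2) ^ m`. Prepending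
`b` to `l` multiplies the potential `K(b :: l) + c_b K(l)`, with `c_1 = 1/2` and `c_b = √2 - 1`
for `b ≥ 2`, by at most `w_b = 5/3 · (3(1 + √2)/5) ^ (b - 1)`, and `∏ w_{aᵢ} ≤ (1 + √2) ^ m` as
soon as the average of the `aᵢ` is at most 2.

For `(1 + √2) ^ k ≤ n < (1 + √2) ^ (k + 1)` this gives `n ^ (log 4 / log (1 + √2) - ε) ≤ catalan k`
once `k` is large.
-/

open List

lemma contAux_cons_cons (a b : ℕ) (l : List ℕ) :
    contAux (a :: b :: l) = a * contAux (b :: l) + contAux l := rfl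

lemma mul_contAux_le_contAux_cons (a : ℕ) (l : List ℕ) : a * contAux l ≤ contAux (a :: l) := by
  cases l with
  | nil => simp [contAux]
  | cons b l => rw [contAux_cons_cons]; omega

lemma contAux_pos : ∀ {l : List ℕ}, (∀ a ∈ l, 0 < a) → 0 < contAux l
  | [], _ => Nat.one_pos
  | [a], h => h a mem_cons_self
  | a :: b :: t, h => by
    rw [contAux_cons_cons]
    have := contAux_pos (l := b :: t) fun x hx => h x (mem_cons_of_mem a hx)
    have := h a mem_cons_self
    positivity

lemma sum_le_contAux : ∀ {l : List ℕ}, (∀ a ∈ l, 0 < a) → l.sum ≤ contAux l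
  | [], _ => Nat.zero_le _
  | [a], _ => by simp [contAux]
  | a :: b :: t, h => by
    have hb := sum_le_contAux (l := b :: t) fun x hx => h x (mem_cons_of_mem a hx)
    have hK := contAux_pos (l := b :: t) fun x hx => h x (mem_cons_of_mem a hx)
    have ht := contAux_pos (l := t) fun x hx => h x (mem_cons_of_mem a (mem_cons_of_mem b hx))
    have ha := h a mem_cons_self
    rw [contAux_cons_cons, sum_cons]
    nlinarith

noncomputable def silverRatio : ℝ := 1 + Real.sqrt 2

lemma silverRatio_sq : silverRatio ^ 2 = 2 * silverRatio + 1 := by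
  have := Real.sq_sqrt (show (0:ℝ) ≤ 2 by norm_num)
  unfold silverRatio; nlinarith

lemma lt_silverRatio : 12 / 5 < silverRatio := by
  have : (7 / 5 : ℝ) < Real.sqrt 2 := by
    rw [Real.lt_sqrt (by norm_num)]; norm_num
  unfold silverRatio; linarith

lemma silverRatio_lt : silverRatio < 5 / 2 := by
  have : Real.sqrt 2 < 3 / 2 := by
    rw [Real.sqrt_lt' (by norm_num)]; norm_num
  unfold silverRatio; linarith

noncomputable def entryWeight (a : ℕ) : ℝ := 5 / 3 * (3 / 5 * silverRatio) ^ (a - 1)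

/-- `√2 - 1 = 1 / (1 + √2)` is forced by the sequence `2, 2, 2, …`, for which `K` grows like
`(1 + √2) ^ m`; an entry `1` needs the larger coefficient `1/2`. -/
noncomputable def tailCoeff (a : ℕ) : ℝ := if a = 1 then 1 / 2 else silverRatio - 2

lemma entryWeight_nonneg (a : ℕ) : 0 ≤ entryWeight a := by
  have := lt_silverRatio; unfold entryWeight; positivity

lemma silverRatio_sub_two_le_tailCoeff (a : ℕ) : silverRatio - 2 ≤ tailCoeff a := by
  unfold tailCoeff; split_ifs
  · linarith [silverRatio_lt]
  · rfl

lemma entryWeight_mul {a : ℕ} (ha : 0 < a) :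
    entryWeight a * (3 / 5 * silverRatio) = 5 / 3 * (3 / 5 * silverRatio) ^ a := by
  rw [entryWeight, mul_assoc, ← pow_succ, Nat.sub_add_cancel ha]

lemma add_silverRatio_sub_two_le_entryWeight {b : ℕ} (hb : 2 ≤ b) :
    b + (silverRatio - 2) ≤ entryWeight b := by
  induction b, hb using Nat.le_induction with
  | base => norm_num [entryWeight]; linarith
  | succ b hb ih =>
    have hw : entryWeight (b + 1) = entryWeight b * (3 / 5 * silverRatio) := by
      rw [entryWeight_mul (by omega), entryWeight, Nat.add_sub_cancel]
    have hb' : (2 : ℝ) ≤ b := by exact_mod_cast hb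
    rw [hw]; push_cast
    nlinarith [lt_silverRatio, silverRatio_lt]

/-- One step of the potential: `x = K(l)` and `y = K(tail l)`, where `a` is the head of `l`. -/
lemma potential_step {a b : ℕ} (ha : 1 ≤ a) (hb : 1 ≤ b) {x y : ℝ} (hy : 0 ≤ y)
    (hxy : a * y ≤ x) : (b + tailCoeff b) * x + y ≤ entryWeight b * (x + tailCoeff a * y) := by
  have hx : 0 ≤ x := le_trans (by positivity) hxy
  rcases hb.eq_or_lt with rfl | hb2
  · have hc1 : tailCoeff 1 = 1 / 2 := if_pos rfl
    have hw1 : entryWeight 1 = 5 / 3 := by norm_num [entryWeight]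
    rw [hc1, hw1]; push_cast
    rcases ha.eq_or_lt with rfl | ha2
    · rw [hc1]; push_cast at hxy; linarith
    · -- `x ≥ 2y` makes up for the small coefficient `√2 - 1` of `y`
      have h2y : 2 * y ≤ x := le_trans (by gcongr; exact_mod_cast ha2) hxy
      rw [tailCoeff, if_neg ha2.ne']
      nlinarith [lt_silverRatio]
  · -- `(1 + √2)(√2 - 1) = 1`
    have hwc : 1 ≤ entryWeight b * tailCoeff a := by
      have : (2 : ℝ) ≤ b := by exact_mod_cast hb2
      nlinarith [add_silverRatio_sub_two_le_entryWeight hb2, silverRatio_sub_two_le_tailCoeff a,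
        silverRatio_sq, lt_silverRatio]
    rw [tailCoeff, if_neg hb2.ne']
    nlinarith [add_silverRatio_sub_two_le_entryWeight hb2]

lemma contAux_cons_add_tailCoeff_mul_le {l : List ℕ} (hl : ∀ a ∈ l, 0 < a) {b : ℕ} (hb : 0 < b) :
    contAux (b :: l) + tailCoeff b * contAux l ≤ entryWeight b * (l.map entryWeight).prod := by
  induction l generalizing b with
  | nil => simpa [contAux] using potential_step (x := 1) le_rfl hb le_rfl (by simp)
  | cons a t ih =>
    have ha : 0 < a := hl a mem_cons_self
    have hstep := potential_step ha hb (Nat.cast_nonneg (contAux t))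
      (by exact_mod_cast mul_contAux_le_contAux_cons a t : (a : ℝ) * contAux t ≤ contAux (a :: t))
    have hih := ih (fun x hx => hl x (mem_cons_of_mem a hx)) ha
    rw [contAux_cons_cons, map_cons, prod_cons]
    push_cast
    calc _ = (b + tailCoeff b) * contAux (a :: t) + contAux t := by ring
      _ ≤ _ := hstep
      _ ≤ _ := mul_le_mul_of_nonneg_left hih (entryWeight_nonneg b)

lemma contAux_le_prod_entryWeight {l : List ℕ} (hl : ∀ a ∈ l, 0 < a) :
    (contAux l : ℝ) ≤ (l.map entryWeight).prod := by
  cases l with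
  | nil => simp [contAux]
  | cons b t =>
    have hc : 0 ≤ tailCoeff b * contAux t :=
      mul_nonneg (le_trans (by linarith [lt_silverRatio]) (silverRatio_sub_two_le_tailCoeff b))
        (Nat.cast_nonneg _)
    rw [map_cons, prod_cons]
    linarith [contAux_cons_add_tailCoeff_mul_le (fun x hx => hl x (mem_cons_of_mem b hx))
      (hl b mem_cons_self)]

lemma prod_entryWeight_mul_pow {l : List ℕ} (hl : ∀ a ∈ l, 0 < a) :
    (l.map entryWeight).prod * (3 / 5 * silverRatio) ^ l.length =
      (5 / 3) ^ l.length * (3 / 5 * silverRatio) ^ l.sum := by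
  induction l with
  | nil => simp
  | cons a t ih =>
    rw [map_cons, prod_cons, length_cons, sum_cons, pow_succ, pow_add]
    calc _ = (entryWeight a * (3 / 5 * silverRatio)) *
          ((t.map entryWeight).prod * (3 / 5 * silverRatio) ^ t.length) := by ring
      _ = _ := by
        rw [entryWeight_mul (hl a mem_cons_self), ih (fun x hx => hl x (mem_cons_of_mem a hx))]
        ring

lemma prod_entryWeight_le {l : List ℕ} (hl : ∀ a ∈ l, 0 < a) (hsum : l.sum ≤ 2 * l.length) :
    (l.map entryWeight).prod ≤ silverRatio ^ l.length := by
  have ht : 1 ≤ 3 / 5 * silverRatio := by linarith [lt_silverRatio]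
  have hpos : 0 < (3 / 5 * silverRatio) ^ l.length := by positivity
  refine le_of_mul_le_mul_right ?_ hpos
  rw [prod_entryWeight_mul_pow hl]
  calc (5 / 3) ^ l.length * (3 / 5 * silverRatio) ^ l.sum
      ≤ (5 / 3) ^ l.length * (3 / 5 * silverRatio) ^ (2 * l.length) := by
        gcongr
    _ = (5 / 3 * (3 / 5 * silverRatio)) ^ l.length * (3 / 5 * silverRatio) ^ l.length := by
        rw [two_mul, pow_add, mul_pow (5 / 3 : ℝ)]; ring
    _ = silverRatio ^ l.length * (3 / 5 * silverRatio) ^ l.length := by ring_nf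

lemma continuant_le_silverRatio_pow {l : List ℕ} (hl : ∀ a ∈ l, 0 < a)
    (hsum : l.sum ≤ 2 * l.length) : (continuant l : ℝ) ≤ silverRatio ^ l.length := by
  have hl' : ∀ a ∈ l.reverse, 0 < a := fun a ha => hl a (mem_reverse.mp ha)
  rw [continuant, ← length_reverse]
  exact (contAux_le_prod_entryWeight hl').trans
    (prod_entryWeight_le hl' (by rwa [sum_reverse, length_reverse]))

lemma finite_setOf_pos_sum_le (n : ℕ) : {l : List ℕ | (∀ a ∈ l, 0 < a) ∧ l.sum ≤ n}.Finite := by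
  refine ((Set.finite_Iic n).biUnion fun s _ =>
    Set.finite_range (Composition.blocks (n := s))).subset ?_
  rintro l ⟨hpos, hsum⟩
  exact Set.mem_biUnion (Set.mem_Iic.mpr hsum) ⟨⟨l, hpos _, rfl⟩, rfl⟩

section DyckRuns

open DyckStep

def countLeadingD : List DyckStep → ℕ
  | [] => 0
  | U :: _ => 0
  | D :: w => countLeadingD w + 1

/-- `runLengths (U D^c₁ U D^c₂ ⋯ U D^cₘ) = [c₁, c₂, …, cₘ]`. -/
def runLengths : List DyckStep → List ℕ
  | [] => []
  | U :: w => countLeadingD w :: runLengths w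
  | D :: w => runLengths w

def ofRunLengths (c : List ℕ) : List DyckStep := c.flatMap fun k => U :: replicate k D

lemma replicate_countLeadingD_append_ofRunLengths (w : List DyckStep) :
    replicate (countLeadingD w) D ++ ofRunLengths (runLengths w) = w := by
  induction w with
  | nil => rfl
  | cons s w ih =>
    cases s with
    | U => simpa [countLeadingD, runLengths, ofRunLengths] using ih
    | D => simpa [countLeadingD, runLengths, replicate_succ] using ih

lemma count_U_ofRunLengths (c : List ℕ) : (ofRunLengths c).count U = c.length := by
  induction c with
  | nil => rfl
  | cons k c ih => simpa [ofRunLengths, count_replicate] using ih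

lemma count_D_ofRunLengths (c : List ℕ) : (ofRunLengths c).count D = c.sum := by
  induction c with
  | nil => rfl
  | cons k c ih => simpa [ofRunLengths] using ih

lemma ofRunLengths_runLengths (p : DyckWord) : ofRunLengths (runLengths p.toList) = p.toList := by
  have h := replicate_countLeadingD_append_ofRunLengths p.toList
  rcases hp : p.toList with _ | ⟨s, w⟩
  · rfl
  · have hs : s = U := by simpa [hp] using p.head_eq_U (by simp [hp])
    subst hs
    simpa [hp, countLeadingD] using h

lemma length_runLengths (p : DyckWord) : (runLengths p.toList).length = p.semilength := by
  rw [← count_U_ofRunLengths, ofRunLengths_runLengths]; rfl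

lemma sum_take_runLengths_le (p : DyckWord) (r : ℕ) : ((runLengths p.toList).take r).sum ≤ r := by
  set c := runLengths p.toList
  have hsplit : p.toList = ofRunLengths (c.take r) ++ ofRunLengths (c.drop r) := by
    rw [← ofRunLengths_runLengths p, ofRunLengths, ofRunLengths, ofRunLengths, ← flatMap_append,
      take_append_drop]
  have hpre : ofRunLengths (c.take r) = p.toList.take (ofRunLengths (c.take r)).length := by
    rw [hsplit, take_left]
  have h := p.count_D_le_count_U (ofRunLengths (c.take r)).length
  rw [← hpre, count_D_ofRunLengths, count_U_ofRunLengths] at h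
  exact h.trans (length_take_le r c)

end DyckRuns

def avgList (p : DyckWord) : List ℕ := (runLengths p.toList).map (· + 1)

lemma sum_take_avgList_le (p : DyckWord) (r : ℕ) : ((avgList p).take r).sum ≤ 2 * r := by
  have := sum_take_runLengths_le p r
  have := length_take_le r (runLengths p.toList)
  simp only [avgList, ← map_take, sum_map_add, map_id_fun', id_eq, map_const', sum_replicate,
    smul_eq_mul, mul_one]
  omega

lemma avgList_injective : Function.Injective avgList := fun p q h => by
  have h' : runLengths p.toList = runLengths q.toList :=
    map_injective_iff.mpr (add_left_injective 1) h
  exact DyckWord.ext (by rw [← ofRunLengths_runLengths p, h', ofRunLengths_runLengths])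

lemma catalan_le_card {n k : ℕ} (hk : silverRatio ^ k ≤ n) :
    catalan k ≤ Nat.card {l : List ℕ // (∀ x ∈ l, 0 < x) ∧ BddAvg 2 l ∧ continuant l ≤ n} := by
  have : Finite {l : List ℕ // (∀ x ∈ l, 0 < x) ∧ BddAvg 2 l ∧ continuant l ≤ n} := by
    refine Set.Finite.to_subtype ((finite_setOf_pos_sum_le n).subset ?_)
    rintro l ⟨hpos, -, hK⟩
    refine ⟨hpos, le_trans ?_ hK⟩
    rw [continuant, ← sum_reverse]
    exact sum_le_contAux fun a ha => hpos a (mem_reverse.mp ha)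
  rw [← DyckWord.card_dyckWord_semilength_eq_catalan, ← Nat.card_eq_fintype_card]
  refine Nat.card_le_card_of_injective (fun p => ⟨avgList p.1, ?_, ?_, ?_⟩) ?_
  · simp [avgList]
  · exact fun r _ _ => sum_take_avgList_le p.1 r
  · have hlen : (avgList p.1).length = k := by rw [avgList, length_map, length_runLengths, p.2]
    have hsum := sum_take_avgList_le p.1 (avgList p.1).length
    rw [take_length] at hsum
    have := continuant_le_silverRatio_pow (by simp [avgList]) hsum
    rw [hlen] at this
    exact_mod_cast this.trans hk
  · exact fun p q h => Subtype.ext (avgList_injective (congrArg Subtype.val h))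

open Filter Asymptotics

lemma isLittleO_pow_catalan {q : ℝ} (hq : |q| < 4) :
    (fun k : ℕ => q ^ k) =o[atTop] fun k => (catalan k : ℝ) := by
  have hsmall : (fun k : ℕ => (k : ℝ) ^ 2 * q ^ k) =o[atTop] fun k => (4 : ℝ) ^ k :=
    isLittleO_pow_const_mul_const_pow_const_pow_of_norm_lt 2 (by simpa using hq)
  have hcat : (fun k : ℕ => (4 : ℝ) ^ k) =O[atTop] fun k => (k : ℝ) ^ 2 * catalan k := by
    refine IsBigO.of_bound 4 (eventually_atTop.mpr ⟨1, fun k hk => ?_⟩)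
    have h := Nat.four_pow_le_two_mul_self_mul_centralBinom k hk
    rw [← succ_mul_catalan_eq_centralBinom] at h
    have h' : (4 : ℝ) ^ k ≤ 2 * k * ((k + 1) * catalan k) := by exact_mod_cast h
    have hk' : (1 : ℝ) ≤ k := by exact_mod_cast hk
    rw [Real.norm_of_nonneg (by positivity), Real.norm_of_nonneg (by positivity)]
    nlinarith [mul_le_mul_of_nonneg_right (show (k : ℝ) + 1 ≤ 2 * k by linarith)
      (by positivity : (0 : ℝ) ≤ 2 * k * catalan k)]
  refine ((hsmall.trans_isBigO hcat).mul_isBigO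
    (isBigO_refl (fun k : ℕ => ((k : ℝ) ^ 2)⁻¹) atTop)).congr' ?_ ?_ <;>
  filter_upwards [eventually_ne_atTop 0] with k hk <;> field_simp

lemma rpow_le_mul_pow {x c ε n : ℝ} {k : ℕ} (hx : 1 < x) (hc : 1 ≤ c) (hε : 0 ≤ ε)
    (hkn : x ^ k ≤ n) (hnk : n < x ^ (k + 1)) :
    n ^ (Real.log c / Real.log x - ε) ≤ c * (c / x ^ ε) ^ k := by
  have hn : 0 < n := (pow_pos (by linarith) k).trans_le hkn
  have hlx : 0 < Real.log x := Real.log_pos hx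
  have hlc : 0 ≤ Real.log c := Real.log_nonneg hc
  have hxε : 0 < x ^ ε := Real.rpow_pos_of_pos (by linarith) ε
  have hlo : k * Real.log x ≤ Real.log n := by
    rw [← Real.log_pow]; exact Real.log_le_log (by positivity) hkn
  have hhi : Real.log n ≤ (k + 1) * Real.log x := by
    rw [← Nat.cast_succ, ← Real.log_pow]; exact Real.log_le_log hn hnk.le
  rw [← Real.log_le_log_iff (by positivity) (by positivity), Real.log_rpow hn, Real.log_mul
    (by positivity) (by positivity), Real.log_pow, Real.log_div (by positivity) hxε.ne',
    Real.log_rpow (by linarith)]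
  set α := Real.log c / Real.log x
  have hα : Real.log c = α * Real.log x := (div_mul_cancel₀ _ hlx.ne').symm
  have hα0 : 0 ≤ α := div_nonneg hlc hlx.le
  rw [hα]
  nlinarith [mul_le_mul_of_nonneg_left hhi hα0, mul_le_mul_of_nonneg_left hlo hε]

theorem sbar_lower_bound (ε : ℝ) (hε : 0 < ε) :
    ∃ N : ℕ, ∀ n ≥ N,
      (n : ℝ) ^ (2 * Real.log 2 / Real.log (1 + Real.sqrt 2) - ε) ≤
        (Nat.card {l : List ℕ // (∀ x ∈ l, 0 < x) ∧ BddAvg 2 l ∧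
          continuant l ≤ n} : ℝ) := by
  have hσ : 1 < silverRatio := by linarith [lt_silverRatio]
  have hq : |4 / silverRatio ^ ε| < 4 := by
    have := Real.one_lt_rpow hσ hε
    rw [abs_of_pos (by positivity)]
    exact div_lt_self (by norm_num) this
  obtain ⟨K, hK⟩ :=
    eventually_atTop.mp ((isLittleO_pow_catalan hq).bound (by norm_num : (0 : ℝ) < 1 / 4))
  refine ⟨⌈silverRatio ^ K⌉₊, fun n hn => ?_⟩
  have hKn : silverRatio ^ K ≤ n := (Nat.le_ceil _).trans (by exact_mod_cast hn)
  obtain ⟨k, hkn, hnk⟩ := exists_nat_pow_near (one_le_pow₀ hσ.le |>.trans hKn) hσ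
  have hKk : K ≤ k := Nat.lt_succ_iff.mp ((pow_lt_pow_iff_right₀ hσ).mp (hKn.trans_lt hnk))
  have hcat := hK k hKk
  rw [Real.norm_of_nonneg (by positivity), Real.norm_of_nonneg (by positivity)] at hcat
  have hlog : 2 * Real.log 2 = Real.log 4 := by
    rw [← Real.log_rpow (by norm_num)]; norm_num
  calc (n : ℝ) ^ (2 * Real.log 2 / Real.log (1 + Real.sqrt 2) - ε)
      = (n : ℝ) ^ (Real.log 4 / Real.log silverRatio - ε) := by rw [hlog]; rfl
    _ ≤ 4 * (4 / silverRatio ^ ε) ^ k := rpow_le_mul_pow hσ (by norm_num) hε.le hkn hnk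
    _ ≤ catalan k := by linarith
    _ ≤ _ := by exact_mod_cast catalan_le_card hkn
end
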